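/- If the n-stage values v_n of a dynamic programming problem converge uniformly to a function v, then for every ε > 0 there exists n₀ such that for all n ≥ n₀, every initial state s, every feasible play (s_m) that is ε-optimal for the n-stage problem starting at s, and every t ∈ [0,1], one has |(1/n) Σ_{m=1}^{⌊tn⌋} f(s_m) − t·v(s)| ≤ 3ε. -/

import Mathlib

open Filter Finset

/-- A dynamic programming problem: a set of states `S`, a correspondence `Phi`
with nonempty values, and a payoff function `f` with values in `[0,1]`. -/
structure DPP (S : Type*) where
  Phi : S → Set S
  phi_nonempty : ∀ s, (Phi s).Nonempty
  f : S → ℝ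
  f_mem : ∀ s, f s ∈ Set.Icc (0 : ℝ) 1

variable {S : Type*}

/-- A feasible play at `s`: a sequence `(s_m)_{m ≥ 1}` with `s₁ = s` and
`s_{m+1} ∈ Φ(s_m)`. -/
def DPP.Feasible (P : DPP S) (s : S) (play : ℕ → S) : Prop :=
  play 1 = s ∧ ∀ m, 1 ≤ m → play (m + 1) ∈ P.Phi (play m)

/-- The `n`-stage average payoff of a play: `(1/n) Σ_{m=1}^n f(s_m)`. -/
noncomputable def DPP.avg (P : DPP S) (n : ℕ) (play : ℕ → S) : ℝ :=
  (1 / (n : ℝ)) * ∑ m ∈ Finset.Icc 1 n, P.f (play m)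

/-- The `n`-stage value: supremum of the `n`-stage average payoff over feasible plays. -/
noncomputable def DPP.val (P : DPP S) (n : ℕ) (s : S) : ℝ :=
  sSup {x | ∃ play, P.Feasible s play ∧ x = P.avg n play}

open Topology

/-!
Split an `ε`-optimal `n`-stage play at stage `k = ⌊t n⌋`. The first `k` stages earn at most
`k v_k(s) ≈ k v(s)`. The last `n - k` stages form a feasible play from `s_{k+1}`, so they earn at
most `(n - k) v_{n-k}(s_{k+1}) ≈ (n - k) v(s_{k+1})`, and `v(s_{k+1}) ≤ v(s)` because prefixing
`k` stages (with nonnegative payoffs) to a long play from `s_{k+1}` gives a play from `s`. Since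
the whole play earns at least `n (v_n(s) - ε) ≈ n (v(s) - ε)`, the first `k` stages earn at least
`k v(s)` minus errors of order `n ε`; the uniformity of the convergence makes all the `≈` hold
with the same error for every state.
-/

lemma Finset.sum_Icc_one_add {M : Type*} [AddCommMonoid M] (g : ℕ → M) (k l : ℕ) :
    ∑ m ∈ Icc 1 (k + l), g m = ∑ m ∈ Icc 1 k, g m + ∑ j ∈ Icc 1 l, g (k + j) := by
  have h : ∀ n, Icc 1 n = Ioc 0 n := fun n => Icc_add_one_left_eq_Ioc 0 n
  rw [h, h, h, ← sum_Ioc_consecutive _ (Nat.zero_le k) (Nat.le_add_right k l)]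
  congr 1
  simpa using sum_map (Ioc 0 l) (addLeftEmbedding k) g

lemma abs_natFloor_mul_sub_mul_le {a w : ℝ} (ha : 0 ≤ a) (hw₀ : 0 ≤ w) (hw₁ : w ≤ 1) :
    |⌊a⌋₊ * w - a * w| ≤ 1 := by
  have := Nat.floor_le ha
  have := Nat.lt_floor_add_one a
  rw [abs_le]
  constructor <;> nlinarith

namespace DPP

variable (P : DPP S)

lemma exists_feasible (s : S) : ∃ play, P.Feasible s play := by
  choose next hnext using P.phi_nonempty
  refine ⟨fun m => next^[m - 1] s, rfl, fun m hm => ?_⟩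
  obtain ⟨j, rfl⟩ := Nat.exists_eq_add_of_le hm
  simpa [add_comm 1 j, Function.iterate_succ_apply'] using hnext _

variable {P}

lemma Feasible.shift {s : S} {play : ℕ → S} (h : P.Feasible s play) (k : ℕ) :
    P.Feasible (play (k + 1)) (fun m => play (k + m)) :=
  ⟨rfl, fun m hm => h.2 (k + m) (by omega)⟩

lemma Feasible.append {s : S} {play play' : ℕ → S} (h : P.Feasible s play) {k : ℕ}
    (h' : P.Feasible (play (k + 1)) play') :
    P.Feasible s (fun m => if m ≤ k then play m else play' (m - k)) := by
  refine ⟨?_, fun m hm => ?_⟩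
  · rcases k.eq_zero_or_pos with rfl | hk
    · simpa [h.1] using h'.1
    · simp [hk.ne', h.1]
  rcases lt_trichotomy m k with hmk | rfl | hmk
  · simpa [hmk.le, Nat.succ_le_of_lt hmk] using h.2 m hm
  · simpa [h'.1] using h.2 m hm
  · simpa [hmk.not_ge, show ¬ m + 1 ≤ k by omega, show m + 1 - k = m - k + 1 by omega]
      using h'.2 (m - k) (by omega)

variable (P)

lemma mul_avg (n : ℕ) (play : ℕ → S) :
    (n : ℝ) * P.avg n play = ∑ m ∈ Icc 1 n, P.f (play m) := by
  rcases Nat.eq_zero_or_pos n with rfl | hn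
  · simp
  · rw [avg, ← mul_assoc, mul_one_div_cancel (by positivity), one_mul]

lemma avg_le_one (n : ℕ) (play : ℕ → S) : P.avg n play ≤ 1 := by
  have hsum : ∑ m ∈ Icc 1 n, P.f (play m) ≤ n := by
    simpa using sum_le_card_nsmul (Icc 1 n) _ 1 fun m _ => (P.f_mem (play m)).2
  rw [avg, one_div_mul_eq_div]
  exact div_le_one_of_le₀ hsum n.cast_nonneg

lemma bddAbove_avg (n : ℕ) (s : S) :
    BddAbove {x | ∃ play, P.Feasible s play ∧ x = P.avg n play} :=
  ⟨1, by rintro x ⟨play, -, rfl⟩; exact P.avg_le_one n play⟩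

lemma avg_le_val {s : S} {play : ℕ → S} (h : P.Feasible s play) (n : ℕ) :
    P.avg n play ≤ P.val n s :=
  le_csSup (P.bddAbove_avg n s) ⟨play, h, rfl⟩

lemma val_le_of_forall_avg_le {n : ℕ} {s : S} {c : ℝ}
    (hc : ∀ play, P.Feasible s play → P.avg n play ≤ c) : P.val n s ≤ c := by
  obtain ⟨play, h⟩ := P.exists_feasible s
  exact csSup_le ⟨_, play, h, rfl⟩ (by rintro x ⟨q, hq, rfl⟩; exact hc q hq)

lemma val_nonneg (n : ℕ) (s : S) : 0 ≤ P.val n s := by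
  obtain ⟨play, h⟩ := P.exists_feasible s
  refine le_trans ?_ (P.avg_le_val h n)
  rw [avg]
  exact mul_nonneg (by positivity) (sum_nonneg fun m _ => (P.f_mem (play m)).1)

lemma val_le_one (n : ℕ) (s : S) : P.val n s ≤ 1 :=
  P.val_le_of_forall_avg_le fun play _ => P.avg_le_one n play

lemma sum_le_mul_val {s : S} {play : ℕ → S} (h : P.Feasible s play) (n : ℕ) :
    ∑ m ∈ Icc 1 n, P.f (play m) ≤ n * P.val n s := by
  rw [← mul_avg]
  exact mul_le_mul_of_nonneg_left (P.avg_le_val h n) n.cast_nonneg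

lemma mul_val_le_mul_val_add {s : S} {play : ℕ → S} (h : P.Feasible s play) (k l : ℕ) :
    l * P.val l (play (k + 1)) ≤ (k + l : ℕ) * P.val (k + l) s := by
  rcases Nat.eq_zero_or_pos l with rfl | hl
  · simpa using mul_nonneg k.cast_nonneg (P.val_nonneg k s)
  rw [← le_div_iff₀' (by positivity)]
  refine P.val_le_of_forall_avg_le fun play' h' => ?_
  rw [le_div_iff₀' (by positivity), mul_avg]
  have hsum := P.sum_le_mul_val (h.append h') (k + l)
  have hhead : 0 ≤ ∑ m ∈ Icc 1 k, P.f (if m ≤ k then play m else play' (m - k)) :=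
    sum_nonneg fun m _ => (P.f_mem _).1
  have htail : ∑ j ∈ Icc 1 l, P.f (if k + j ≤ k then play (k + j) else play' (k + j - k)) =
      ∑ j ∈ Icc 1 l, P.f (play' j) :=
    sum_congr rfl fun j hj => by simp [show ¬ k + j ≤ k by simp at hj; omega]
  rw [sum_Icc_one_add, htail] at hsum
  linarith

section Limit

variable {v : S → ℝ}

lemma limit_mem_Icc (hv : ∀ x, Tendsto (fun n => P.val n x) atTop (𝓝 (v x))) (x : S) :
    v x ∈ Set.Icc (0 : ℝ) 1 :=
  ⟨ge_of_tendsto' (hv x) (P.val_nonneg · x), le_of_tendsto' (hv x) (P.val_le_one · x)⟩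

lemma limit_le_of_feasible (hv : ∀ x, Tendsto (fun n => P.val n x) atTop (𝓝 (v x))) {s : S}
    {play : ℕ → S} (h : P.Feasible s play) (k : ℕ) :
    v (play (k + 1)) ≤ v s := by
  have hle : ∀ l : ℕ, (l / (l + k) : ℝ) * P.val l (play (k + 1)) ≤ P.val (l + k) s := fun l => by
    rw [div_mul_eq_mul_div]
    refine div_le_of_le_mul₀ (by positivity) (P.val_nonneg _ s) ?_
    simpa [add_comm, mul_comm] using P.mul_val_le_mul_val_add h k l
  simpa using le_of_tendsto_of_tendsto' ((tendsto_natCast_div_add_atTop (k : ℝ)).mul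
    (hv (play (k + 1)))) ((hv s).comp (tendsto_add_atTop_nat k)) hle

lemma mul_val_le_mul_add (hv0 : ∀ x, 0 ≤ v x) {δ : ℝ} (hδ : 0 ≤ δ) {N : ℕ}
    (hN : ∀ m ≥ N, ∀ x, P.val m x ≤ v x + δ) (m : ℕ) (x : S) :
    m * P.val m x ≤ m * (v x + δ) + N := by
  rcases le_or_gt N m with hm | hm
  · nlinarith [hN m hm x, (N.cast_nonneg : (0 : ℝ) ≤ N)]
  · have : (m : ℝ) ≤ N := by exact_mod_cast hm.le
    nlinarith [P.val_le_one m x, P.val_nonneg m x, hv0 x, (m.cast_nonneg : (0 : ℝ) ≤ m)]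

lemma abs_sum_sub_mul_le (hv : ∀ x, Tendsto (fun n => P.val n x) atTop (𝓝 (v x))) {δ : ℝ}
    (hδ : 0 ≤ δ) {N : ℕ} (hN : ∀ m ≥ N, ∀ x, |P.val m x - v x| ≤ δ) {ε : ℝ} {n : ℕ} {s : S}
    {play : ℕ → S} (h : P.Feasible s play) (hn : N ≤ n) (hopt : P.avg n play ≥ P.val n s - ε)
    {k : ℕ} (hk : k ≤ n) :
    |∑ m ∈ Icc 1 k, P.f (play m) - k * v s| ≤ n * (ε + 2 * δ) + N := by
  obtain ⟨l, rfl⟩ := Nat.exists_eq_add_of_le hk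
  have hv0 x := (P.limit_mem_Icc hv x).1
  have hup : ∀ m ≥ N, ∀ x, P.val m x ≤ v x + δ := fun m hm x => by
    linarith [(abs_le.mp (hN m hm x)).2]
  have hε : 0 ≤ ε := by linarith [P.avg_le_val h (k + l)]
  have hhead := (P.sum_le_mul_val h k).trans (P.mul_val_le_mul_add hv0 hδ hup k s)
  have htail : ∑ j ∈ Icc 1 l, P.f (play (k + j)) ≤ l * (v s + δ) + N := by
    refine ((P.sum_le_mul_val (h.shift k) l).trans (P.mul_val_le_mul_add hv0 hδ hup l _)).trans ?_
    gcongr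
    exact P.limit_le_of_feasible hv h k
  have hlow : v s - δ ≤ P.val (k + l) s := by
    linarith [(abs_le.mp (hN (k + l) hn s)).1]
  have hopt' := mul_le_mul_of_nonneg_left hopt (Nat.cast_nonneg (α := ℝ) (k + l))
  rw [mul_avg, sum_Icc_one_add] at hopt'
  push_cast at hopt' ⊢
  rw [abs_le]
  constructor <;> nlinarith

end Limit

end DPP

/-- If the n-stage values `v_n` converge uniformly to `v`, then for every `ε > 0` there is
`n₀` such that for all `n ≥ n₀`, every state `s`, every feasible play `ε`-optimal for the
`n`-stage problem at `s`, and every `t ∈ [0,1]`: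
`|(1/n) Σ_{m=1}^{⌊tn⌋} f(s_m) − t·v(s)| ≤ 3ε`. -/
theorem property_P_of_regular (P : DPP S) (v : S → ℝ)
    (hconv : TendstoUniformly (fun n s => P.val n s) v atTop) :
    ∀ ε > (0 : ℝ), ∃ n₀ : ℕ, ∀ n ≥ n₀, ∀ s : S, ∀ play : ℕ → S,
      P.Feasible s play → P.avg n play ≥ P.val n s - ε →
      ∀ t ∈ Set.Icc (0 : ℝ) 1,
        |(1 / (n : ℝ)) * ∑ m ∈ Finset.Icc 1 ⌊t * (n : ℝ)⌋₊, P.f (play m) - t * v s| ≤ 3 * ε := by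
  intro ε hε
  obtain ⟨N, hN⟩ : ∃ N, ∀ m ≥ N, ∀ x, |P.val m x - v x| ≤ ε / 2 := by
    obtain ⟨N, hN⟩ := eventually_atTop.mp (Metric.tendstoUniformly_iff.mp hconv _ (half_pos hε))
    exact ⟨N, fun m hm x => by rw [abs_sub_comm]; exact (hN m hm x).le⟩
  obtain ⟨n₀, hn₀⟩ := eventually_atTop.mp ((eventually_ge_atTop N).and
    (tendsto_natCast_atTop_atTop.eventually_ge_atTop ((N + 1) / ε)))
  refine ⟨n₀, fun n hn s play h hopt t ht => ?_⟩
  obtain ⟨hNn, hnε⟩ := hn₀ n hn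
  rw [div_le_iff₀ hε] at hnε
  have hv x := hconv.tendsto_at x
  have hvs := P.limit_mem_Icc hv s
  have hk : ⌊t * n⌋₊ ≤ n := Nat.floor_le_of_le (by nlinarith [ht.2, n.cast_nonneg (α := ℝ)])
  have hsum := P.abs_sum_sub_mul_le hv (half_pos hε).le hN h hNn hopt hk
  have hfloor := abs_natFloor_mul_sub_mul_le (mul_nonneg ht.1 n.cast_nonneg) hvs.1 hvs.2
  have hn0 : (0 : ℝ) < n := by nlinarith
  rw [one_div_mul_eq_div, div_sub' hn0.ne', abs_div, abs_of_pos hn0, div_le_iff₀ hn0,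
    show (n : ℝ) * (t * v s) = t * n * v s by ring]
  linarith [abs_sub_le (∑ m ∈ Icc 1 ⌊t * n⌋₊, P.f (play m)) (⌊t * n⌋₊ * v s) (t * n * v s)]
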